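/- arXiv:2509.15601 — 4 statements merged into one kernel-verified Lean document; each statement's English description precedes it below -/
import Mathlib

section
/- If A ∈ ℂ^{M×Q} and B ∈ ℂ^{N×Q} both have Kruskal rank Q (i.e., full column rank equal to Q in every subset sense), then their column-wise Khatri-Rao product A ⊙ B ∈ ℂ^{MN×Q} has rank Q. -/
open Matrix

/-- The Kruskal rank of a matrix. -/
noncomputable def krank {m : Type*} [Fintype m] {n : ℕ}
    (A : Matrix m (Fin n) ℂ) : ℕ :=
  sSup {k : ℕ | k ≤ n ∧ ∀ s : Finset (Fin n), s.card = k →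
    LinearIndependent ℂ (fun j : s => (fun i => A i (j : Fin n)))}

/-- Column-wise Kronecker (Khatri-Rao) product. -/
def khatriRao {M N Q : ℕ} (A : Matrix (Fin M) (Fin Q) ℂ)
    (B : Matrix (Fin N) (Fin Q) ℂ) : Matrix (Fin M × Fin N) (Fin Q) ℂ :=
  fun p q => A p.1 q * B p.2 q

/-! Full Kruskal rank means linearly independent columns. The columns `a_q ⊗ b_q` of `A ⊙ B`
are then independent as soon as every `b_q` is nonzero: reading a vanishing combination
`∑ c q • (a_q ⊗ b_q)` along a row `n` of `B` gives `∑ (c q * B n q) • a_q = 0`, so every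
`c q * B n q` vanishes. -/

theorem linearIndependent_col_of_krank_eq {m : Type*} [Fintype m] {n : ℕ}
    {A : Matrix m (Fin n) ℂ} (h : krank A = n) : LinearIndependent ℂ A.col := by
  set S : Set ℕ := {k : ℕ | k ≤ n ∧ ∀ s : Finset (Fin n), s.card = k →
    LinearIndependent ℂ (fun j : s => (fun i => A i (j : Fin n)))}
  have zero_mem : 0 ∈ S := by
    refine ⟨Nat.zero_le _, fun s hs => ?_⟩
    obtain rfl := Finset.card_eq_zero.mp hs
    exact linearIndependent_empty_type
  have n_mem : n ∈ S := h ▸ Nat.sSup_mem ⟨0, zero_mem⟩ ⟨n, fun k hk => hk.1⟩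
  have h_univ := n_mem.2 Finset.univ (Finset.card_fin n)
  exact h_univ.comp (fun j => ⟨j, Finset.mem_univ j⟩) fun _ _ hij => congrArg Subtype.val hij

theorem linearIndependent_col_khatriRao {M N Q : ℕ}
    {A : Matrix (Fin M) (Fin Q) ℂ} {B : Matrix (Fin N) (Fin Q) ℂ}
    (hA : LinearIndependent ℂ A.col) (hB : ∀ q, B.col q ≠ 0) :
    LinearIndependent ℂ (khatriRao A B).col := by
  refine Fintype.linearIndependent_iff.mpr fun c hc q => ?_
  have slice_eq_zero : ∀ n p, c p * B n p = 0 := by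
    intro n
    refine Fintype.linearIndependent_iff.mp hA (fun p => c p * B n p) (funext fun m => ?_)
    have hmn := congrFun hc (m, n)
    simp only [Finset.sum_apply, Pi.smul_apply, smul_eq_mul, col_apply, khatriRao,
      Pi.zero_apply] at hmn ⊢
    rw [← hmn]
    exact Finset.sum_congr rfl fun p _ => by ring
  have hcq : c q • B.col q = 0 := funext fun n => slice_eq_zero n q
  exact (smul_eq_zero.mp hcq).resolve_right (hB q)

theorem rank_khatriRao_of_full_krank
    {M N Q : ℕ} (A : Matrix (Fin M) (Fin Q) ℂ) (B : Matrix (Fin N) (Fin Q) ℂ)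
    (hA : krank A = Q) (hB : krank B = Q) :
    (khatriRao A B).rank = Q := by
  have hB_ne_zero : ∀ q, B.col q ≠ 0 := (linearIndependent_col_of_krank_eq hB).ne_zero
  have hKR : LinearIndependent ℂ (khatriRao A B)ᵀ.row :=
    linearIndependent_col_khatriRao (linearIndependent_col_of_krank_eq hA) hB_ne_zero
  simpa only [rank_transpose, Fintype.card_fin] using hKR.rank_matrix
end

section
/- Under the hypotheses of the previous statement, if U_s ∈ ℂ^{K×Q} is any matrix whose columns form an orthonormal basis of the eigenspace corresponding to the Q eigenvalues larger than σ², then there exists an invertible matrix T ∈ ℂ^{Q×Q} such that U_s = A T. -/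
open Matrix

/-! An eigenvector `x` of `R = A D Aᴴ + σ² I` for an eigenvalue `μ ≠ σ²` satisfies
`x = A (D Aᴴ x) / (μ - σ²)`, so it lies in the column space of `A`. Hence every column of `U_s`
is `A` times some vector, i.e. `U_s = A T`; since the columns of `U_s = A T` are linearly
independent, the square matrix `T` is injective, hence invertible. -/

theorem Module.End.eigenspace_le_range_of_eq_comp_add_smul {K V W : Type*} [Field K]
    [AddCommGroup V] [Module K V] [AddCommGroup W] [Module K W]
    {f : Module.End K V} {a : W →ₗ[K] V} {b : V →ₗ[K] W} {c μ : K}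
    (hf : f = a ∘ₗ b + c • 1) (hμ : μ ≠ c) :
    Module.End.eigenspace f μ ≤ LinearMap.range a := by
  intro v hv
  rw [Module.End.mem_eigenspace_iff, hf] at hv
  have hab : a (b v) = (μ - c) • v := by
    rw [sub_smul, ← hv]
    simp
  refine ⟨(μ - c)⁻¹ • b v, ?_⟩
  rw [map_smul, hab, smul_smul, inv_mul_cancel₀ (sub_ne_zero.mpr hμ), one_smul]

theorem Matrix.exists_eq_mul_of_col_mem_range {R m n p : Type*} [CommSemiring R]
    [Fintype n] {A : Matrix m n R} {U : Matrix m p R}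
    (hU : ∀ q, U.col q ∈ Set.range A.mulVec) : ∃ T : Matrix n p R, U = A * T := by
  choose w hw using hU
  refine ⟨(Matrix.of w)ᵀ, ?_⟩
  ext i q
  simpa [Matrix.mul_apply, Matrix.mulVec, dotProduct] using (congrFun (hw q) i).symm

theorem Matrix.isUnit_of_linearIndependent_col_mul {K m n : Type*} [Field K]
    [Fintype n] [DecidableEq n] {A : Matrix m n K} {T : Matrix n n K}
    (h : LinearIndependent K (A * T).col) : IsUnit T :=
  mulVec_injective_iff_isUnit.mp fun x y hxy =>
    mulVec_injective_iff.mpr h (by rw [← mulVec_mulVec, ← mulVec_mulVec, hxy])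

theorem signal_subspace_factorization_general
    {K Q : ℕ}
    (A : Matrix (Fin K) (Fin Q) ℂ)
    (d : Fin Q → ℝ)
    (s : ℝ)
    (R : Matrix (Fin K) (Fin K) ℂ)
    (hRdef : R = A * Matrix.diagonal (fun q => (d q : ℂ)) * A.conjTranspose
      + (s : ℂ) • (1 : Matrix (Fin K) (Fin K) ℂ))
    (Us : Matrix (Fin K) (Fin Q) ℂ)
    -- the columns of `Us` are orthonormal
    (horth : Orthonormal ℂ
      (fun q : Fin Q => (EuclideanSpace.equiv (Fin K) ℂ).symm (fun i => Us i q)))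
    -- and they span the eigenspace corresponding to the eigenvalues larger than `s`
    (hspan : Submodule.span ℂ
        (Set.range (fun q : Fin Q =>
          (EuclideanSpace.equiv (Fin K) ℂ).symm (fun i => Us i q)))
      = ⨆ (μ : ℝ) (_ : s < μ),
          Module.End.eigenspace
            (Matrix.toEuclideanLin R : Module.End ℂ (EuclideanSpace ℂ (Fin K)))
            (μ : ℂ)) :
    ∃ T : Matrix (Fin Q) (Fin Q) ℂ, IsUnit T ∧ Us = A * T := by
  have hR : (toEuclideanLin R : Module.End ℂ (EuclideanSpace ℂ (Fin K))) =
      toEuclideanLin A ∘ₗ toEuclideanLin (diagonal (fun q => (d q : ℂ)) * Aᴴ) + (s : ℂ) • 1 := by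
    rw [hRdef, Matrix.mul_assoc, map_add, map_smul, toLpLin_mul_same, toLpLin_one]
    rfl
  have hsignal : (⨆ (μ : ℝ) (_ : s < μ), Module.End.eigenspace
      (toEuclideanLin R : Module.End ℂ (EuclideanSpace ℂ (Fin K))) (μ : ℂ)) ≤
      LinearMap.range (toEuclideanLin A) :=
    iSup₂_le fun μ hμ => Module.End.eigenspace_le_range_of_eq_comp_add_smul hR
      (by exact_mod_cast hμ.ne')
  have hcol : ∀ q, Us.col q ∈ Set.range A.mulVec := fun q => by
    obtain ⟨w, hw⟩ := hsignal (hspan ▸ Submodule.subset_span (Set.mem_range_self q))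
    exact ⟨WithLp.ofLp w, congrArg WithLp.ofLp hw⟩
  obtain ⟨T, rfl⟩ := exists_eq_mul_of_col_mem_range hcol
  exact ⟨T, isUnit_of_linearIndependent_col_mul
    (horth.linearIndependent.map' (WithLp.linearEquiv 2 ℂ (Fin K → ℂ)).toLinearMap
      (LinearEquiv.ker _)), rfl⟩

theorem signal_subspace_factorization
    {K Q : ℕ} (hQK : Q < K)
    (A : Matrix (Fin K) (Fin Q) ℂ) (hA : A.rank = Q)
    (d : Fin Q → ℝ) (hd : ∀ q, 0 < d q)
    (s : ℝ) (hs : 0 < s)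
    (R : Matrix (Fin K) (Fin K) ℂ)
    (hRdef : R = A * Matrix.diagonal (fun q => (d q : ℂ)) * A.conjTranspose
      + (s : ℂ) • (1 : Matrix (Fin K) (Fin K) ℂ))
    (Us : Matrix (Fin K) (Fin Q) ℂ)
    -- the columns of `Us` are orthonormal
    (horth : Orthonormal ℂ
      (fun q : Fin Q => (EuclideanSpace.equiv (Fin K) ℂ).symm (fun i => Us i q)))
    -- and they span the eigenspace corresponding to the eigenvalues larger than `s`
    (hspan : Submodule.span ℂ
        (Set.range (fun q : Fin Q =>
          (EuclideanSpace.equiv (Fin K) ℂ).symm (fun i => Us i q)))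
      = ⨆ (μ : ℝ) (_ : s < μ),
          Module.End.eigenspace
            (Matrix.toEuclideanLin R : Module.End ℂ (EuclideanSpace ℂ (Fin K)))
            (μ : ℂ)) :
    ∃ T : Matrix (Fin Q) (Fin Q) ℂ, IsUnit T ∧ Us = A * T :=
  signal_subspace_factorization_general A d s R hRdef Us horth hspan
end

section
/- Let A ∈ ℂ^{K×Q} have full column rank and Ψ a Q×Q diagonal matrix with distinct diagonal entries. Suppose U₁ = A₁T and U₂ = A₂T with A₂ = A₁Ψ, where A₁ has full column rank and T is invertible. Then U₁ has full column rank and U₁⁺U₂ = T⁻¹ΨT; in particular the eigenvalues of U₁⁺U₂ are exactly the diagonal entries of Ψ. -/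
/-! Every left inverse `L` of `U₁ = A₁ T` satisfies `(L A₁) T = 1`, hence `L A₁ = T⁻¹`, so
`L U₂ = T⁻¹ Ψ T` is similar to `Ψ`; a left inverse exists because `A₁` has full column rank. -/

open Matrix

theorem Matrix.exists_mul_eq_one_of_rank_eq_card {m n R : Type*} [Field R] [Fintype m]
    [Fintype n] [DecidableEq n] {A : Matrix m n R} (hA : A.rank = Fintype.card n) :
    ∃ B : Matrix n m R, B * A = 1 := by
  have hrange : LinearMap.range Aᵀ.mulVecLin = ⊤ :=
    Submodule.eq_top_of_finrank_eq <| by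
      rw [← Matrix.rank, rank_transpose, hA, Module.finrank_fintype_fun_eq_card]
  rw [← vecMul_surjective_iff_exists_left_inverse]
  intro v
  obtain ⟨w, hw⟩ := LinearMap.range_eq_top.mp hrange v
  exact ⟨w, (mulVec_transpose A w).symm.trans hw⟩

theorem Matrix.spectrum_mul_diagonal_mul_eq_range {n R : Type*} [Field R] [Fintype n]
    [DecidableEq n] (d : n → R) {T Ti : Matrix n n R} (hT : T * Ti = 1) :
    spectrum R (Ti * diagonal d * T) = Set.range d :=
  let u : (Matrix n n R)ˣ := ⟨T, Ti, hT, mul_eq_one_comm.mp hT⟩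
  (spectrum.units_conjugate' (u := u)).trans (spectrum_diagonal d)

theorem esprit_rotational_invariance_general
    {K Q : ℕ}
    (A1 : Matrix (Fin K) (Fin Q) ℂ) (hA1 : A1.rank = Q)
    (dΨ : Fin Q → ℂ)
    (T Ti : Matrix (Fin Q) (Fin Q) ℂ)
    (hTi : T * Ti = 1)
    (U1 U2 : Matrix (Fin K) (Fin Q) ℂ)
    (hU1 : U1 = A1 * T)
    (hU2 : U2 = A1 * Matrix.diagonal dΨ * T) :
    U1.rank = Q ∧
    ∃ L : Matrix (Fin Q) (Fin K) ℂ, L * U1 = 1 ∧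
      ∀ L' : Matrix (Fin Q) (Fin K) ℂ, L' * U1 = 1 →
        L' * U2 = Ti * Matrix.diagonal dΨ * T ∧
        spectrum ℂ (L' * U2) = Set.range dΨ := by
  have hdetT : IsUnit T.det := isUnit_det_of_right_inverse hTi
  obtain ⟨B, hB⟩ := exists_mul_eq_one_of_rank_eq_card (hA1.trans (Fintype.card_fin Q).symm)
  refine ⟨by rw [hU1, rank_mul_eq_left_of_isUnit_det _ _ hdetT, hA1], Ti * B, ?_, fun L' hL' => ?_⟩
  · rw [hU1, Matrix.mul_assoc, ← Matrix.mul_assoc B, hB, Matrix.one_mul, mul_eq_one_comm.mp hTi]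
  · have hLA1 : L' * A1 = Ti := left_inv_eq_right_inv (by rwa [hU1, ← Matrix.mul_assoc] at hL') hTi
    have hLU2 : L' * U2 = Ti * diagonal dΨ * T := by
      rw [hU2, ← Matrix.mul_assoc, ← Matrix.mul_assoc, hLA1]
    exact ⟨hLU2, hLU2 ▸ spectrum_mul_diagonal_mul_eq_range dΨ hTi⟩

theorem esprit_rotational_invariance
    {K Q : ℕ}
    (A1 : Matrix (Fin K) (Fin Q) ℂ) (hA1 : A1.rank = Q)
    (dΨ : Fin Q → ℂ) (hdist : Function.Injective dΨ)
    (T Ti : Matrix (Fin Q) (Fin Q) ℂ)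
    (hTi : T * Ti = 1) (hTi' : Ti * T = 1)
    (U1 U2 : Matrix (Fin K) (Fin Q) ℂ)
    (hU1 : U1 = A1 * T)
    (hU2 : U2 = A1 * Matrix.diagonal dΨ * T) :
    U1.rank = Q ∧
    ∃ L : Matrix (Fin Q) (Fin K) ℂ, L * U1 = 1 ∧
      ∀ L' : Matrix (Fin Q) (Fin K) ℂ, L' * U1 = 1 →
        L' * U2 = Ti * Matrix.diagonal dΨ * T ∧
        spectrum ℂ (L' * U2) = Set.range dΨ :=
  esprit_rotational_invariance_general A1 hA1 dΨ T Ti hTi U1 U2 hU1 hU2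
end

section
/- Let Ψ and Ω be Q×Q diagonal matrices, with the diagonal entries of Ψ distinct, and T invertible. If M₁ = T⁻¹ΨT and M₂ = T⁻¹ΩT, then any eigendecomposition M₁ = S⁻¹Ψ'S with Ψ' diagonal satisfies Ψ' = PΨP⁻¹ for some permutation matrix P and S = D P T for some invertible diagonal D; consequently S M₂ S⁻¹ = P Ω P⁻¹ is diagonal with the same permutation P, so the pairing between diagonal entries of Ψ and Ω is preserved. -/
/-!
Write `W = S T⁻¹`. The hypothesis says `W Ψ = Ψ' W`, i.e. `W i j Ψ_j = Ψ'_i W i j`, so every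
nonzero entry `W i j` forces `Ψ_j = Ψ'_i`. Since the `Ψ_j` are distinct, each row of `W` has
at most one nonzero entry, and since `W` is invertible it has exactly one in every row and in
every column. Hence `W = D P_σ` is a monomial matrix with `Ψ' = Ψ ∘ σ`, and conjugating any
diagonal matrix by a monomial matrix just permutes its diagonal by the same `σ`.
-/

open Matrix

/-- Permutation matrix of `σ`. -/
def permMatrix {Q : ℕ} (σ : Equiv.Perm (Fin Q)) : Matrix (Fin Q) (Fin Q) ℂ :=
  (Equiv.toPEquiv σ).toMatrix

namespace Matrix

variable {n R : Type*} [Fintype n] [DecidableEq n] [CommRing R]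

theorem permMatrix_mul_diagonal (σ : Equiv.Perm n) (e : n → R) :
    σ.permMatrix R * diagonal e = diagonal (e ∘ σ) * σ.permMatrix R := by
  ext i j
  by_cases hj : j = σ i <;> simp [hj, Ne.symm]

theorem mul_diagonal_eq_diagonal_comp_mul {W : Matrix n n R} {dD : n → R} {σ : Equiv.Perm n}
    (hW : W = diagonal dD * σ.permMatrix R) (e : n → R) :
    W * diagonal e = diagonal (e ∘ σ) * W := by
  rw [hW, mul_assoc, permMatrix_mul_diagonal, ← mul_assoc, (commute_diagonal dD _).eq, mul_assoc]

theorem eq_diagonal_mul_permMatrix {W : Matrix n n R} (σ : Equiv.Perm n)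
    (hW : ∀ i j, W i j ≠ 0 → j = σ i) :
    W = diagonal (fun i => W i (σ i)) * σ.permMatrix R := by
  ext i j
  by_cases hj : j = σ i
  · simp [hj]
  · simpa [hj, Ne.symm hj] using not_not.mp (mt (hW i j) hj)

theorem apply_eq_of_mul_diagonal_eq_diagonal_mul [NoZeroDivisors R] {W : Matrix n n R}
    {d d' : n → R} (h : W * diagonal d = diagonal d' * W) {i j : n} (hij : W i j ≠ 0) :
    d j = d' i := by
  have hij' := congrFun (congrFun h i) j
  rw [mul_diagonal, diagonal_mul, mul_comm] at hij'
  exact mul_right_cancel₀ hij hij'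

variable [Nontrivial R]

theorem exists_row_ne_zero_of_isUnit {W : Matrix n n R} (hW : IsUnit W) (i : n) :
    ∃ j, W i j ≠ 0 := by
  by_contra! h
  exact (isUnit_iff_isUnit_det W).mp hW |>.ne_zero (det_eq_zero_of_row_eq_zero i h)

theorem exists_column_ne_zero_of_isUnit {W : Matrix n n R} (hW : IsUnit W) (j : n) :
    ∃ i, W i j ≠ 0 := by
  by_contra! h
  exact (isUnit_iff_isUnit_det W).mp hW |>.ne_zero (det_eq_zero_of_column_eq_zero j h)

theorem exists_perm_of_isUnit_of_row_subsingleton {W : Matrix n n R} (hW : IsUnit W)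
    (hrow : ∀ i j k, W i j ≠ 0 → W i k ≠ 0 → j = k) :
    ∃ σ : Equiv.Perm n, (∀ i, W i (σ i) ≠ 0) ∧ ∀ i j, W i j ≠ 0 → j = σ i := by
  choose f hf using exists_row_ne_zero_of_isUnit hW
  have hsurj : Function.Surjective f := fun j =>
    (exists_column_ne_zero_of_isUnit hW j).imp fun i hi => (hrow i j (f i) hi (hf i)).symm
  let σ := Equiv.ofBijective f ⟨Finite.injective_iff_surjective.mpr hsurj, hsurj⟩
  exact ⟨σ, hf, fun i j hij => hrow i j (f i) hij (hf i)⟩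

theorem exists_perm_of_mul_diagonal_eq_diagonal_mul [NoZeroDivisors R] {W : Matrix n n R}
    {d d' : n → R} (hd : Function.Injective d) (hW : IsUnit W)
    (h : W * diagonal d = diagonal d' * W) :
    ∃ σ : Equiv.Perm n, (∀ i, W i (σ i) ≠ 0) ∧ d' = d ∘ σ ∧
      W = diagonal (fun i => W i (σ i)) * σ.permMatrix R := by
  have hsupp : ∀ {i j}, W i j ≠ 0 → d j = d' i := apply_eq_of_mul_diagonal_eq_diagonal_mul h
  obtain ⟨σ, hσ, hsupp_σ⟩ := exists_perm_of_isUnit_of_row_subsingleton hW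
    fun i j k hj hk => hd ((hsupp hj).trans (hsupp hk).symm)
  exact ⟨σ, hσ, funext fun i => (hsupp (hσ i)).symm, eq_diagonal_mul_permMatrix σ hsupp_σ⟩

end Matrix

theorem joint_diagonalization_pairing_general
    {Q : ℕ}
    (dΨ dΩ dΨ' : Fin Q → ℂ) (hdist : Function.Injective dΨ)
    (T Ti S Si : Matrix (Fin Q) (Fin Q) ℂ)
    (hT : T * Ti = 1)
    (hS : S * Si = 1)
    -- M₁ = T⁻¹ Ψ T admits the eigendecomposition M₁ = S⁻¹ Ψ' S
    (hM1 : Ti * Matrix.diagonal dΨ * T = Si * Matrix.diagonal dΨ' * S) :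
    ∃ (σ : Equiv.Perm (Fin Q)) (dD : Fin Q → ℂ),
      (∀ q, dD q ≠ 0) ∧
      dΨ' = dΨ ∘ σ ∧
      S = Matrix.diagonal dD * permMatrix σ * T ∧
      S * (Ti * Matrix.diagonal dΩ * T) * Si = Matrix.diagonal (dΩ ∘ σ) := by
  have hTi : Ti * T = 1 := mul_eq_one_comm.mp hT
  have hW : IsUnit (S * Ti) := (IsUnit.of_mul_eq_one Si hS).mul (.of_mul_eq_one_right T hT)
  have hcomm : S * Ti * diagonal dΨ = diagonal dΨ' * (S * Ti) := calc
    S * Ti * diagonal dΨ = S * (Ti * diagonal dΨ * T) * Ti := by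
      simp only [Matrix.mul_assoc, hT, Matrix.mul_one]
    _ = S * (Si * diagonal dΨ' * S) * Ti := by rw [hM1]
    _ = diagonal dΨ' * (S * Ti) := by simp only [← Matrix.mul_assoc, hS, Matrix.one_mul]
  obtain ⟨σ, hσ, hΨ', hWσ⟩ := exists_perm_of_mul_diagonal_eq_diagonal_mul hdist hW hcomm
  have hST : S = S * Ti * T := by rw [Matrix.mul_assoc, hTi, Matrix.mul_one]
  refine ⟨σ, _, hσ, hΨ', hST.trans (congrArg (· * T) hWσ), ?_⟩
  calc S * (Ti * diagonal dΩ * T) * Si = S * Ti * diagonal dΩ * (T * Si) := by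
        simp only [Matrix.mul_assoc]
    _ = diagonal (dΩ ∘ σ) * (S * (Ti * T) * Si) := by
        rw [mul_diagonal_eq_diagonal_comp_mul hWσ]; simp only [Matrix.mul_assoc]
    _ = diagonal (dΩ ∘ σ) := by rw [hTi, Matrix.mul_one, hS, Matrix.mul_one]

theorem joint_diagonalization_pairing
    {Q : ℕ}
    (dΨ dΩ dΨ' : Fin Q → ℂ) (hdist : Function.Injective dΨ)
    (T Ti S Si : Matrix (Fin Q) (Fin Q) ℂ)
    (hT : T * Ti = 1) (hT' : Ti * T = 1)
    (hS : S * Si = 1) (hS' : Si * S = 1)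
    -- M₁ = T⁻¹ Ψ T admits the eigendecomposition M₁ = S⁻¹ Ψ' S
    (hM1 : Ti * Matrix.diagonal dΨ * T = Si * Matrix.diagonal dΨ' * S) :
    ∃ (σ : Equiv.Perm (Fin Q)) (dD : Fin Q → ℂ),
      (∀ q, dD q ≠ 0) ∧
      dΨ' = dΨ ∘ σ ∧
      S = Matrix.diagonal dD * permMatrix σ * T ∧
      S * (Ti * Matrix.diagonal dΩ * T) * Si = Matrix.diagonal (dΩ ∘ σ) :=
  joint_diagonalization_pairing_general dΨ dΩ dΨ' hdist T Ti S Si hT hS hM1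
end
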